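/- arXiv:2602.21090 — 2 statements merged into one kernel-verified Lean document; each statement's English description precedes it below -/
import Mathlib

section
/- For every N ≥ 1, every integer k with 0 ≤ k ≤ N−1, and every β ∈ (0,1), the polynomial equation (β/N) · Σ_{m=k}^{N−1} C(m,k) t^{m−k} − C(N,k) t^{N−k} = 0 has exactly one solution t(k) in the interval [0,1], and this solution lies in (0,1). -/
/-!
Write `f = scenPoly N β k`. Then `f 0 = β / N > 0`, and by the hockey-stick identity
`f 1 = (β / N) C(N, k+1) - C(N, k) ≤ (β - 1) C(N, k) < 0`, so a root exists in `(0, 1)`.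
For `t > 0`, `f t = t ^ (N - k) * g t` with
`g t = (β / N) Σ_{k ≤ m < N} C(m, k) t ^ (-(N - m)) - C(N, k)` strictly decreasing,
so `f` has at most one positive root; and `0` is not a root.
-/

/-- The polynomial (in `t`) appearing in the definition of the scenario-approach
violation function: `(β/N) · Σ_{m=k}^{N−1} C(m,k) t^{m−k} − C(N,k) t^{N−k}`. -/
noncomputable def scenPoly (N : ℕ) (β : ℝ) (k : ℕ) (t : ℝ) : ℝ :=
  (β / N) * ∑ m ∈ Finset.Ico k N, (m.choose k : ℝ) * t ^ (m - k)
    - (N.choose k : ℝ) * t ^ (N - k)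

open Finset

theorem Nat.sum_Ico_choose (n k : ℕ) : ∑ m ∈ Ico k n, m.choose k = n.choose (k + 1) := by
  cases n with
  | zero => simp
  | succ n => rw [Ico_add_one_right_eq_Icc, Nat.sum_Icc_choose]

theorem Nat.choose_succ_right_le_mul (n k : ℕ) : n.choose (k + 1) ≤ n * n.choose k :=
  calc n.choose (k + 1) ≤ n.choose (k + 1) * (k + 1) := Nat.le_mul_of_pos_right _ k.succ_pos
    _ = n.choose k * (n - k) := n.choose_succ_right_eq k
    _ ≤ n.choose k * n := Nat.mul_le_mul_left _ (n.sub_le k)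
    _ = n * n.choose k := Nat.mul_comm _ _

theorem strictAntiOn_sum_mul_inv_pow {ι : Type*} {s : Finset ι} (hs : s.Nonempty) {a : ι → ℝ}
    {d : ι → ℕ} (ha : ∀ i ∈ s, 0 < a i) (hd : ∀ i ∈ s, d i ≠ 0) :
    StrictAntiOn (fun t : ℝ => ∑ i ∈ s, a i * (t ^ d i)⁻¹) (Set.Ioi 0) := by
  intro x hx y _ hxy
  refine sum_lt_sum_of_nonempty hs fun i hi => mul_lt_mul_of_pos_left ?_ (ha i hi)
  exact inv_strictAnti₀ (pow_pos hx _) (pow_lt_pow_left₀ hxy (le_of_lt hx) (hd i hi))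

theorem continuous_scenPoly (N : ℕ) (β : ℝ) (k : ℕ) : Continuous (scenPoly N β k) := by
  unfold scenPoly
  fun_prop

section ScenPoly

variable {N k : ℕ} {β : ℝ}

theorem scenPoly_zero (hk : k < N) : scenPoly N β k 0 = β / N := by
  have hsum : ∑ m ∈ Ico k N, (m.choose k : ℝ) * 0 ^ (m - k) = 1 := by
    rw [sum_eq_single_of_mem k (mem_Ico.mpr ⟨le_rfl, hk⟩)]
    · simp
    · intro m hm hmk
      rw [mem_Ico] at hm
      simp [zero_pow (show m - k ≠ 0 by omega)]
  rw [scenPoly, hsum, zero_pow (by omega)]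
  ring

theorem scenPoly_one : scenPoly N β k 1 = β / N * N.choose (k + 1) - N.choose k := by
  simp [scenPoly, ← Nat.cast_sum, Nat.sum_Ico_choose]

theorem scenPoly_one_neg (hβ₀ : 0 ≤ β) (hβ₁ : β < 1) (hk : k < N) : scenPoly N β k 1 < 0 := by
  have hN : (0 : ℝ) < N := by exact_mod_cast (k.zero_le.trans_lt hk)
  have hc : (0 : ℝ) < N.choose k := by exact_mod_cast Nat.choose_pos hk.le
  have hle : (N.choose (k + 1) : ℝ) ≤ N * N.choose k := by
    exact_mod_cast Nat.choose_succ_right_le_mul N k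
  rw [scenPoly_one, sub_neg]
  calc β / N * N.choose (k + 1) ≤ β / N * (N * N.choose k) := by gcongr
    _ = β * N.choose k := by field_simp
    _ < N.choose k := mul_lt_of_lt_one_left hc hβ₁

theorem scenPoly_eq_pow_mul {s : ℝ} (hs : s ≠ 0) :
    scenPoly N β k s = s ^ (N - k) *
      (β / N * ∑ m ∈ Ico k N, (m.choose k : ℝ) * (s ^ (N - m))⁻¹ - N.choose k) := by
  have hpow : ∀ m ∈ Ico k N, (m.choose k : ℝ) * s ^ (m - k)
      = s ^ (N - k) * ((m.choose k : ℝ) * (s ^ (N - m))⁻¹) := by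
    intro m hm
    rw [mem_Ico] at hm
    rw [show N - k = (m - k) + (N - m) by omega, pow_add]
    field_simp
  rw [scenPoly, sum_congr rfl hpow, ← mul_sum]
  ring

theorem eq_of_scenPoly_eq_zero (hβ : 0 < β) (hk : k < N) {a b : ℝ} (ha : 0 < a) (hb : 0 < b)
    (hfa : scenPoly N β k a = 0) (hfb : scenPoly N β k b = 0) : a = b := by
  set g : ℝ → ℝ := fun s => β / N * ∑ m ∈ Ico k N, (m.choose k : ℝ) * (s ^ (N - m))⁻¹
  have hg : StrictAntiOn g (Set.Ioi 0) := by
    have hN : (0 : ℝ) < N := by exact_mod_cast (k.zero_le.trans_lt hk)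
    intro x hx y hy hxy
    have := strictAntiOn_sum_mul_inv_pow ⟨k, mem_Ico.mpr ⟨le_rfl, hk⟩⟩
      (fun m hm => (by exact_mod_cast Nat.choose_pos (mem_Ico.mp hm).1 : (0 : ℝ) < m.choose k))
      (fun m hm => Nat.sub_ne_zero_of_lt (mem_Ico.mp hm).2) hx hy hxy
    exact mul_lt_mul_of_pos_left this (div_pos hβ hN)
  have hg_root : ∀ s : ℝ, 0 < s → scenPoly N β k s = 0 → g s = N.choose k := by
    intro s hs hfs
    rw [scenPoly_eq_pow_mul hs.ne'] at hfs
    exact sub_eq_zero.mp ((mul_eq_zero.mp hfs).resolve_left (pow_ne_zero _ hs.ne'))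
  exact hg.injOn ha hb ((hg_root a ha hfa).trans (hg_root b hb hfb).symm)

end ScenPoly

/-- For every `N ≥ 1`, every `0 ≤ k ≤ N−1` and every `β ∈ (0,1)`, the equation
`scenPoly N β k t = 0` has exactly one solution in `[0,1]`, and this solution
lies in the open interval `(0,1)`. -/
theorem stmt_0 (N : ℕ) (hN : 1 ≤ N) (k : ℕ) (hk : k ≤ N - 1) (β : ℝ)
    (hβ : β ∈ Set.Ioo (0 : ℝ) 1) :
    ∃ t : ℝ, t ∈ Set.Ioo (0 : ℝ) 1 ∧ scenPoly N β k t = 0 ∧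
      ∀ t' ∈ Set.Icc (0 : ℝ) 1, scenPoly N β k t' = 0 → t' = t := by
  obtain ⟨hβ₀, hβ₁⟩ := hβ
  have hkN : k < N := by omega
  have hf0 : 0 < scenPoly N β k 0 := by
    rw [scenPoly_zero hkN]
    exact div_pos hβ₀ (by exact_mod_cast hN)
  obtain ⟨t, ht, hroot⟩ := intermediate_value_Ioo' zero_le_one
    (continuous_scenPoly N β k).continuousOn ⟨scenPoly_one_neg hβ₀.le hβ₁ hkN, hf0⟩
  refine ⟨t, ht, hroot, fun t' ht' hroot' => ?_⟩
  have ht'₀ : 0 < t' := ht'.1.lt_of_ne (by rintro rfl; exact hf0.ne' hroot')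
  exact eq_of_scenPoly_eq_zero hβ₀ hkN ht'₀ ht.1 hroot' hroot
end

section
/- (Remark 3, tightness of the a priori guarantee.) For all integers 1 ≤ q ≤ N and every β ∈ (0,1), the value ε_{N,β}(q) satisfies Σ_{m=0}^{q−1} C(N,m) ε_{N,β}(q)^m (1 − ε_{N,β}(q))^{N−m} ≤ β; consequently, every ε that is the smallest value in (0,1) satisfying Σ_{m=0}^{q−1} C(N,m) ε^m (1−ε)^{N−m} ≤ β satisfies ε ≤ ε_{N,β}(q). -/
open Finset

namespace Nat

theorem choose_mul_choose_succ_le (N : ℕ) {m j : ℕ} (h : m ≤ j) :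
    N.choose m * N.choose (j + 1) ≤ N.choose (m + 1) * N.choose j := by
  refine Nat.le_of_mul_le_mul_right ?_ (Nat.mul_pos m.succ_pos j.succ_pos)
  calc N.choose m * N.choose (j + 1) * ((m + 1) * (j + 1))
      = N.choose m * N.choose j * ((m + 1) * (N - j)) := by
        rw [show N.choose m * N.choose (j + 1) * ((m + 1) * (j + 1))
          = N.choose m * (m + 1) * (N.choose (j + 1) * (j + 1)) by ring, choose_succ_right_eq]
        ring
    _ ≤ N.choose m * N.choose j * ((j + 1) * (N - m)) :=
        Nat.mul_le_mul_left _ (Nat.mul_le_mul (by omega) (by omega))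
    _ = N.choose (m + 1) * N.choose j * ((m + 1) * (j + 1)) := by
        rw [show N.choose (m + 1) * N.choose j * ((m + 1) * (j + 1))
          = N.choose (m + 1) * (m + 1) * (N.choose j * (j + 1)) by ring, choose_succ_right_eq]
        ring

theorem choose_mul_choose_add_le (N : ℕ) {m j : ℕ} (h : m ≤ j) (d : ℕ) :
    N.choose m * N.choose (j + d) ≤ N.choose (m + d) * N.choose j := by
  induction d generalizing m with
  | zero => rfl
  | succ d ih =>
    rcases h.eq_or_lt with rfl | hmj
    · rw [mul_comm]
    · calc N.choose m * N.choose (j + d + 1)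
          ≤ N.choose (m + 1) * N.choose (j + d) := choose_mul_choose_succ_le N (by omega)
        _ ≤ N.choose (m + 1 + d) * N.choose j := ih hmj
        _ = N.choose (m + (d + 1)) * N.choose j := by rw [add_right_comm, add_assoc]

end Nat

theorem sum_range_sum_range_add_le {M : Type*} [AddCommMonoid M] [PartialOrder M]
    [IsOrderedAddMonoid M] {g : ℕ → M} (hg : ∀ b, 0 ≤ g b) {a c N : ℕ}
    (h : a + c ≤ N + 1) :
    ∑ m ∈ range a, ∑ i ∈ range c, g (m + i) ≤ ∑ b ∈ range N, (b + 1) • g b := by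
  have hmaps : ∀ p ∈ range a ×ˢ range c, p.1 + p.2 ∈ range N := by
    intro p hp
    simp only [mem_product, mem_range] at hp ⊢
    omega
  calc ∑ m ∈ range a, ∑ i ∈ range c, g (m + i)
      = ∑ b ∈ range N, ∑ p ∈ (range a ×ˢ range c).filter (fun p => p.1 + p.2 = b),
          g (p.1 + p.2) := by
        rw [sum_fiberwise_of_maps_to hmaps, sum_product]
    _ ≤ ∑ b ∈ range N, ∑ p ∈ antidiagonal b, g (p.1 + p.2) := by
        refine sum_le_sum fun b _ => sum_le_sum_of_subset_of_nonneg ?_ fun p _ _ => hg _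
        intro p hp
        exact mem_antidiagonal.mpr (mem_filter.mp hp).2
    _ = ∑ b ∈ range N, (b + 1) • g b := by
        refine sum_congr rfl fun b _ => ?_
        rw [sum_congr rfl fun p hp => congrArg g (mem_antidiagonal.mp hp), sum_const,
          Nat.card_antidiagonal]

theorem succ_mul_add_pow_eq_sum {R : Type*} [CommSemiring R] (x y : R) (M : ℕ) :
    (M + 1) * (x + y) ^ M =
      ∑ b ∈ range (M + 1), (b + 1) * ((M + 1).choose (b + 1) : R) * x ^ b * y ^ (M - b) := by
  rw [add_pow, mul_sum]
  refine sum_congr rfl fun b _ => ?_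
  have h := congrArg (Nat.cast : ℕ → R) (Nat.add_one_mul_choose_eq M b)
  push_cast at h
  rw [mul_comm (b + 1 : R), ← h]
  ring

theorem sum_range_choose_mul_pow_eq {R : Type*} [CommRing R] {s t : R} (hst : s + t = 1)
    (q n : ℕ) :
    ∑ i ∈ range (n + 1), ((q + i).choose q : R) * t ^ i =
      ∑ i ∈ range (n + 1), ((q + 1 + n).choose (q + 1 + i) : R) * s ^ i * t ^ (n - i) := by
  induction n with
  | zero => simp
  | succ n ih =>
    set B := ∑ i ∈ range (n + 1), ((q + 1 + n).choose (q + 1 + i) : R) * s ^ i * t ^ (n - i)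
    have hs : ∑ i ∈ range (n + 2), ((q + 1 + n).choose (q + i) : R) * s ^ i * t ^ (n + 1 - i)
        = s * B + (q + 1 + n).choose q * t ^ (n + 1) := by
      rw [sum_range_succ', mul_sum]
      refine congrArg₂ (· + ·) (sum_congr rfl fun i hi => ?_) (by simp)
      rw [show q + (i + 1) = q + 1 + i by omega, show n + 1 - (i + 1) = n - i by omega]
      ring
    have ht : ∑ i ∈ range (n + 2),
        ((q + 1 + n).choose (q + 1 + i) : R) * s ^ i * t ^ (n + 1 - i) = t * B := by
      rw [sum_range_succ, Nat.choose_eq_zero_of_lt (by omega), mul_sum]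
      simp only [Nat.cast_zero, zero_mul, add_zero]
      refine sum_congr rfl fun i hi => ?_
      rw [show n + 1 - i = n - i + 1 by have := mem_range.mp hi; omega]
      ring
    have pascal : ∀ i, ((q + 1 + (n + 1)).choose (q + 1 + i) : R)
        = (q + 1 + n).choose (q + i) + (q + 1 + n).choose (q + 1 + i) := by
      intro i
      rw [show q + 1 + (n + 1) = q + 1 + n + 1 by omega, show q + 1 + i = q + i + 1 by omega,
        Nat.choose_succ_succ', Nat.cast_add]
    calc ∑ i ∈ range (n + 2), ((q + i).choose q : R) * t ^ i
        = (s + t) * B + (q + 1 + n).choose q * t ^ (n + 1) := by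
          rw [sum_range_succ, ih, hst, one_mul, show q + (n + 1) = q + 1 + n by omega]
      _ = ∑ i ∈ range (n + 2),
            ((q + 1 + (n + 1)).choose (q + 1 + i) : R) * s ^ i * t ^ (n + 1 - i) := by
          simp only [pascal, add_mul, sum_add_distrib, hs, ht]
          ring

theorem lower_tail_mul_upper_tail_le (q n : ℕ) {ε t : ℝ} (hε : 0 ≤ ε) (ht : 0 ≤ t)
    (hεt : ε + t = 1) :
    (∑ m ∈ range q, ((q + n + 1).choose m : ℝ) * ε ^ m * t ^ (q + n + 1 - m)) *
        ∑ i ∈ range (n + 1), ((q + n + 1).choose (q + 1 + i) : ℝ) * ε ^ i * t ^ (n - i)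
      ≤ (q + n + 1 : ℕ) * ((q + n + 1).choose q : ℝ) * t ^ (n + 1) := by
  set N := q + n + 1
  set g : ℕ → ℝ := fun b => (N.choose (b + 1) : ℝ) * ε ^ b * t ^ (q + n - b)
  have hg : ∀ b, 0 ≤ g b := fun b => by positivity
  calc (∑ m ∈ range q, (N.choose m : ℝ) * ε ^ m * t ^ (N - m)) *
        ∑ i ∈ range (n + 1), (N.choose (q + 1 + i) : ℝ) * ε ^ i * t ^ (n - i)
      = t ^ (n + 1) * ∑ m ∈ range q, ∑ i ∈ range (n + 1),
          (N.choose m * N.choose (q + 1 + i) : ℕ) * ε ^ (m + i) * t ^ (q + n - (m + i)) := by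
        rw [sum_mul_sum, mul_sum]
        refine sum_congr rfl fun m hm => ?_
        rw [mul_sum]
        refine sum_congr rfl fun i hi => ?_
        have hm := mem_range.mp hm
        have hi := mem_range.mp hi
        rw [show N - m = (q + n - (m + i)) + (i + 1) by omega,
          show n + 1 = (n - i) + (i + 1) by omega]
        push_cast
        ring
    _ ≤ t ^ (n + 1) *
          ((N.choose q : ℝ) * ∑ m ∈ range q, ∑ i ∈ range (n + 1), g (m + i)) := by
        gcongr t ^ (n + 1) * ?_
        rw [mul_sum]
        refine sum_le_sum fun m hm => ?_
        rw [mul_sum]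
        refine sum_le_sum fun i _ => ?_
        have hlc := Nat.choose_mul_choose_add_le N (Nat.le_add_right m (i + 1)) (q - m)
        rw [show m + (i + 1) + (q - m) = q + 1 + i by have := mem_range.mp hm; omega,
          show m + (q - m) = q by have := mem_range.mp hm; omega] at hlc
        simp only [g, ← mul_assoc]
        exact mul_le_mul_of_nonneg_right
          (mul_le_mul_of_nonneg_right (by exact_mod_cast hlc) (by positivity)) (by positivity)
    _ ≤ t ^ (n + 1) * ((N.choose q : ℝ) * ∑ b ∈ range N, (b + 1 : ℕ) • g b) := by
        gcongr
        exact sum_range_sum_range_add_le hg (by omega)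
    _ = (N : ℝ) * (N.choose q : ℝ) * t ^ (n + 1) := by
        have h := succ_mul_add_pow_eq_sum ε t (q + n)
        rw [hεt, one_pow, mul_one] at h
        simp only [nsmul_eq_mul, g, ← mul_assoc]
        push_cast [N] at h ⊢
        rw [← h]
        ring

theorem scenPoly_add_succ (q n : ℕ) (β t : ℝ) :
    scenPoly (q + n + 1) β q t = β / (q + n + 1 : ℕ) *
      ∑ i ∈ range (n + 1), ((q + i).choose q : ℝ) * t ^ i
        - ((q + n + 1).choose q : ℝ) * t ^ (n + 1) := by
  simp only [scenPoly, sum_Ico_eq_sum_range, add_tsub_cancel_left,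
    show q + n + 1 - q = n + 1 by omega]

theorem scenPoly_eval_zero {N k : ℕ} (h : k < N) (β : ℝ) : scenPoly N β k 0 = β / N := by
  obtain ⟨n, rfl⟩ : ∃ n, N = k + n + 1 := ⟨N - k - 1, by omega⟩
  simp [scenPoly_add_succ, sum_range_succ']

theorem binomial_lower_tail_le_of_scenPoly_eq_zero {N q : ℕ} (hqN : q < N) {β t : ℝ}
    (ht : t ∈ Set.Icc (0 : ℝ) 1) (hroot : scenPoly N β q t = 0) :
    ∑ m ∈ range q, (N.choose m : ℝ) * (1 - t) ^ m * t ^ (N - m) ≤ β := by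
  obtain ⟨n, rfl⟩ : ∃ n, N = q + n + 1 := ⟨N - q - 1, by omega⟩
  set H := ∑ i ∈ range (n + 1), ((q + i).choose q : ℝ) * t ^ i with hH_def
  have hH : 0 < H := by
    rw [hH_def, sum_range_succ']
    simp only [add_zero, Nat.choose_self, Nat.cast_one, pow_zero]
    have := ht.1
    positivity
  have hβH : β * H = (q + n + 1 : ℕ) * ((q + n + 1).choose q : ℝ) * t ^ (n + 1) := by
    rw [scenPoly_add_succ, sub_eq_zero, ← hH_def] at hroot
    rw [mul_assoc, ← hroot]
    field_simp
  have hH_eq := sum_range_choose_mul_pow_eq (sub_add_cancel 1 t) q n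
  rw [show q + 1 + n = q + n + 1 by omega] at hH_eq
  refine le_of_mul_le_mul_right ?_ hH
  rw [hβH, hH_def, hH_eq]
  exact lower_tail_mul_upper_tail_le q n (sub_nonneg.mpr ht.2) ht.1 (sub_add_cancel 1 t)

/-- (Remark 3, tightness of the a priori guarantee.) For all `1 ≤ q ≤ N` and
every `β ∈ (0,1)`, the value `ε_{N,β}(q)` satisfies
`Σ_{m=0}^{q−1} C(N,m) ε_{N,β}(q)^m (1 − ε_{N,β}(q))^{N−m} ≤ β`; consequently,
every `ε` that is the smallest value in `(0,1)` satisfying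
`Σ_{m=0}^{q−1} C(N,m) ε^m (1−ε)^{N−m} ≤ β` satisfies `ε ≤ ε_{N,β}(q)`. -/
theorem stmt_12 (N q : ℕ) (hq : 1 ≤ q) (hqN : q ≤ N)
    (β : ℝ) (hβ : β ∈ Set.Ioo (0 : ℝ) 1)
    (t : ℕ → ℝ)
    (ht : ∀ k < N, t k ∈ Set.Icc (0 : ℝ) 1 ∧ scenPoly N β k (t k) = 0)
    (epsq : ℝ)
    (hepsq : epsq = if q = N then 1 else 1 - t q) :
    (∑ m ∈ Finset.range q, (N.choose m : ℝ) * epsq ^ m * (1 - epsq) ^ (N - m) ≤ β)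
      ∧ ∀ ε : ℝ,
        IsLeast {e : ℝ | e ∈ Set.Ioo (0 : ℝ) 1 ∧
            ∑ m ∈ Finset.range q, (N.choose m : ℝ) * e ^ m * (1 - e) ^ (N - m) ≤ β} ε →
        ε ≤ epsq := by
  obtain ⟨hβ0, hβ1⟩ := hβ
  rcases hqN.lt_or_eq with hqN | rfl
  · rw [if_neg hqN.ne] at hepsq
    obtain ⟨ht_mem, hroot⟩ := ht q hqN
    have htail :
        ∑ m ∈ range q, (N.choose m : ℝ) * epsq ^ m * (1 - epsq) ^ (N - m) ≤ β := by
      rw [hepsq, sub_sub_cancel]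
      exact binomial_lower_tail_le_of_scenPoly_eq_zero hqN ht_mem hroot
    have ht_ne_zero : t q ≠ 0 := by
      intro h
      rw [h, scenPoly_eval_zero hqN] at hroot
      have : (0 : ℝ) < N := by exact_mod_cast Nat.zero_lt_of_lt hqN
      exact (div_pos hβ0 this).ne' hroot
    have ht_ne_one : t q ≠ 1 := by
      intro h
      rw [hepsq, h, sub_self] at htail
      obtain ⟨q, rfl⟩ := Nat.exists_eq_add_of_le' hq
      have : (1 : ℝ) ≤ β := by simpa [sum_range_succ'] using htail
      linarith
    refine ⟨htail, fun ε hε => hε.2 ⟨⟨?_, ?_⟩, htail⟩⟩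
    · linarith [lt_of_le_of_ne ht_mem.2 ht_ne_one]
    · linarith [lt_of_le_of_ne ht_mem.1 (Ne.symm ht_ne_zero)]
  · rw [if_pos rfl] at hepsq
    subst hepsq
    refine ⟨?_, fun ε hε => hε.1.1.2.le⟩
    rw [sum_eq_zero fun m hm => ?_]
    · exact hβ0.le
    · rw [sub_self, zero_pow (by have := mem_range.mp hm; omega), mul_zero]
end
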